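/- arXiv:cs/9905015 — 2 statements merged into one kernel-verified Lean document; each statement's English description precedes it below -/
import Mathlib

section
/- The MAXQ decomposition recovers the flat value function: for a hierarchical policy on a two-level hierarchy, V(0,s) = V(π₀(s), s) + C(0, s, π₀(s)), where V(j,s) is the expected reward during execution of child j and C is defined via the Bellman completion equation; moreover V(0,s) satisfies the semi-Markov Bellman equation V(0,s) = Σ_{s',N} P(s',N|s,π₀(s)) [V(π₀(s),s) + γ^N V(0,s')]. -/
/-- MAXQ decomposition recovers the flat value function: V(0,s) =
V(π₀(s),s) + C(0,s,π₀(s)) satisfies the semi-Markov Bellman equation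
V(0,s) = Σ_{s',N} P(s',N|s,π₀(s)) [V(π₀(s),s) + γ^N V(0,s')]. -/
theorem maxq_recovers_flat_value
    {S A : Type*} [Fintype S]
    (γ : ℝ) (hγ : γ ∈ Set.Ioo (0 : ℝ) 1)
    (π : S → A) (V : A → S → ℝ)
    (P : S → A → S → ℕ → ℝ)
    (hP0 : ∀ s j s' N, 0 ≤ P s j s' N)
    (hP1 : ∀ s j, HasSum (fun p : S × ℕ => P s j p.1 p.2) 1)
    (C : S → A → ℝ)
    (hC : ∀ s j, C s j =
      ∑ s', ∑' N : ℕ, P s j s' N * γ ^ N * (V (π s') s' + C s' (π s')))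
    (V0 : S → ℝ) (hV0 : ∀ s, V0 s = V (π s) s + C s (π s)) :
    ∀ s, V0 s =
      ∑ s', ∑' N : ℕ, P s (π s) s' N * (V (π s) s + γ ^ N * V0 s') := by
  intro s
  set j := π s with hj
  have hγ0 : (0:ℝ) ≤ γ := hγ.1.le
  have hγ1 : γ ≤ 1 := hγ.2.le
  have hsumN : ∀ s', Summable (fun N => P s j s' N) := by
    intro s'
    exact (hP1 s j).summable.comp_injective
      (i := fun N => ((s', N) : S × ℕ)) (fun a b h => by simpa using h)
  have hsum2 : ∀ s' (x : ℝ), Summable (fun N => P s j s' N * γ ^ N * x) := by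
    intro s' x
    apply Summable.of_abs
    apply Summable.of_nonneg_of_le (fun N => abs_nonneg _) (fun N => ?_)
      ((hsumN s').mul_right |x|)
    rw [abs_mul, abs_mul, abs_of_nonneg (hP0 s j s' N),
      abs_of_nonneg (pow_nonneg hγ0 N)]
    have hpl : γ ^ N ≤ 1 := pow_le_one₀ hγ0 hγ1
    exact mul_le_mul_of_nonneg_right (mul_le_of_le_one_right (hP0 s j s' N) hpl) (abs_nonneg x)
  -- total mass 1
  have htot : ∑ s', ∑' N : ℕ, P s j s' N = 1 := by
    have h1 := (hP1 s j).tsum_eq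
    rw [Summable.tsum_prod' (hP1 s j).summable (fun s' => hsumN s')] at h1
    rw [← tsum_fintype (L := .unconditional _)]
    exact h1
  have key : ∀ s', ∑' N : ℕ, P s j s' N * (V (π s) s + γ ^ N * V0 s')
      = (∑' N : ℕ, P s j s' N) * V (π s) s
        + ∑' N : ℕ, P s j s' N * γ ^ N * V0 s' := by
    intro s'
    rw [← tsum_mul_right]
    rw [← Summable.tsum_add ((hsumN s').mul_right _) (hsum2 s' (V0 s'))]
    congr 1
    ext N
    ring
  calc V0 s = V (π s) s + C s j := hV0 s
    _ = ∑ s', ∑' N : ℕ, P s j s' N * (V (π s) s + γ ^ N * V0 s') := by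
        rw [hC s j]
        rw [Finset.sum_congr rfl (fun s' _ => key s')]
        rw [Finset.sum_add_distrib, ← Finset.sum_mul, htot, one_mul]
        congr 1
        refine Finset.sum_congr rfl fun s' _ => ?_
        congr 1
        ext N
        rw [hV0 s']
end

section
/- The completion-function Bellman operator is a contraction: for γ ∈ (0,1), the operator (TC)(s,j) = Σ_{s',N} P(s',N|s,j) γ^N [ max_{j'} ( V(j',s') + C(s',j') ) ] is a contraction in the sup norm with modulus at most γ on the space of bounded functions C : S × A → ℝ, provided every macro action takes at least one primitive step (P(s',N|s,j) = 0 for N = 0). -/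
set_option maxHeartbeats 1000000


/-- The completion-function Bellman operator is a γ-contraction in sup norm,
provided every macro action takes at least one primitive step. -/
theorem completion_operator_contraction
    {S A : Type*} [Fintype S] [Fintype A] [Nonempty S] [Nonempty A]
    (γ : ℝ) (hγ : γ ∈ Set.Ioo (0 : ℝ) 1)
    (V : A → S → ℝ)
    (P : S → A → S → ℕ → ℝ)
    (hP0 : ∀ s j s' N, 0 ≤ P s j s' N)
    (hP1 : ∀ s j, HasSum (fun p : S × ℕ => P s j p.1 p.2) 1)
    (hno0 : ∀ s j s', P s j s' 0 = 0) :
    ∀ C₁ C₂ : S → A → ℝ, ∀ s j,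
      |(∑ s', ∑' N : ℕ, P s j s' N * γ ^ N *
          Finset.univ.sup' Finset.univ_nonempty (fun j' => V j' s' + C₁ s' j')) -
       (∑ s', ∑' N : ℕ, P s j s' N * γ ^ N *
          Finset.univ.sup' Finset.univ_nonempty (fun j' => V j' s' + C₂ s' j'))|
      ≤ γ * Finset.univ.sup' Finset.univ_nonempty
              (fun p : S × A => |C₁ p.1 p.2 - C₂ p.1 p.2|) := by
  obtain ⟨hγ0, hγ1⟩ := hγ
  intro C₁ C₂ s j
  set M := Finset.univ.sup' Finset.univ_nonempty
      (fun p : S × A => |C₁ p.1 p.2 - C₂ p.1 p.2|) with hMdef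
  have hM : ∀ s' j', |C₁ s' j' - C₂ s' j'| ≤ M := fun s' j' =>
    Finset.le_sup' (f := fun p : S × A => |C₁ p.1 p.2 - C₂ p.1 p.2|)
      (Finset.mem_univ (s', j'))
  have hM0 : 0 ≤ M :=
    le_trans (abs_nonneg _) (hM (Classical.arbitrary S) (Classical.arbitrary A))
  set f₁ := fun s' => Finset.univ.sup' Finset.univ_nonempty
      (fun j' => V j' s' + C₁ s' j') with hf₁def
  set f₂ := fun s' => Finset.univ.sup' Finset.univ_nonempty
      (fun j' => V j' s' + C₂ s' j') with hf₂def
  have hf : ∀ s', |f₁ s' - f₂ s'| ≤ M := by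
    intro s'
    rw [abs_sub_le_iff]
    constructor
    · rw [sub_le_iff_le_add]
      apply Finset.sup'_le
      intro j' _
      have h1 := abs_le.mp (hM s' j')
      have h2 := Finset.le_sup' (fun j' => V j' s' + C₂ s' j') (Finset.mem_univ j')
      change V j' s' + C₂ s' j' ≤ f₂ s' at h2
      linarith [h1.2]
    · rw [sub_le_iff_le_add]
      apply Finset.sup'_le
      intro j' _
      have h1 := abs_le.mp (hM s' j')
      have h2 := Finset.le_sup' (fun j' => V j' s' + C₁ s' j') (Finset.mem_univ j')
      change V j' s' + C₁ s' j' ≤ f₁ s' at h2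
      linarith [h1.1]
  have hsum : Summable (fun p : S × ℕ => P s j p.1 p.2) := (hP1 s j).summable
  have hinj : ∀ s' : S, Function.Injective (fun N : ℕ => ((s', N) : S × ℕ)) := by
    intro s' a b h; simpa using h
  have hPs : ∀ s', Summable (fun N => P s j s' N) := fun s' =>
    hsum.comp_injective (hinj s')
  have hPγ : ∀ s', Summable (fun N => P s j s' N * γ ^ N) := by
    intro s'
    apply Summable.of_nonneg_of_le (fun N => mul_nonneg (hP0 s j s' N) (pow_nonneg hγ0.le N))
      (fun N => ?_) (hPs s')
    have : γ ^ N ≤ 1 := pow_le_one₀ hγ0.le hγ1.le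
    nlinarith [hP0 s j s' N]
  have key : ∀ s', |(∑' N : ℕ, P s j s' N * γ ^ N * f₁ s') -
      (∑' N : ℕ, P s j s' N * γ ^ N * f₂ s')| ≤
      γ * M * ∑' N : ℕ, P s j s' N := by
    intro s'
    have h1 : Summable (fun N => P s j s' N * γ ^ N * f₁ s') := (hPγ s').mul_right _
    have h2 : Summable (fun N => P s j s' N * γ ^ N * f₂ s') := (hPγ s').mul_right _
    rw [← Summable.tsum_sub h1 h2]
    have habs : ∀ N : ℕ, |P s j s' N * γ ^ N * f₁ s' - P s j s' N * γ ^ N * f₂ s'|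
        ≤ γ * M * P s j s' N := by
      intro N
      rw [← mul_sub, abs_mul]
      have hP := hP0 s j s' N
      have h3 : |P s j s' N * γ ^ N| = P s j s' N * γ ^ N := by
        rw [abs_of_nonneg]; positivity
      rw [h3]
      cases N with
      | zero => simp [hno0 s j s']
      | succ k =>
        have hg : γ ^ (k + 1) ≤ γ := by
          calc γ ^ (k + 1) = γ ^ k * γ := by ring
            _ ≤ 1 * γ := mul_le_mul_of_nonneg_right (pow_le_one₀ hγ0.le hγ1.le) hγ0.le
            _ = γ := one_mul γ
        have hfM := hf s'
        calc P s j s' (k+1) * γ ^ (k+1) * |f₁ s' - f₂ s'|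
            ≤ P s j s' (k+1) * γ * M := by
              apply mul_le_mul _ hfM (abs_nonneg _) (mul_nonneg hP hγ0.le)
              exact mul_le_mul_of_nonneg_left hg hP
          _ = γ * M * P s j s' (k+1) := by ring
    have hsub : Summable (fun N => P s j s' N * γ ^ N * f₁ s' -
        P s j s' N * γ ^ N * f₂ s') := h1.sub h2
    calc |∑' N : ℕ, (P s j s' N * γ ^ N * f₁ s' - P s j s' N * γ ^ N * f₂ s')|
        ≤ ∑' N : ℕ, |P s j s' N * γ ^ N * f₁ s' - P s j s' N * γ ^ N * f₂ s'| := by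
          simpa [Real.norm_eq_abs] using
            norm_tsum_le_tsum_norm (f := fun N : ℕ =>
              P s j s' N * γ ^ N * f₁ s' - P s j s' N * γ ^ N * f₂ s')
              (by simpa [Real.norm_eq_abs] using hsub.abs)
      _ ≤ ∑' N : ℕ, γ * M * P s j s' N := by
          exact Summable.tsum_le_tsum habs hsub.abs ((hPs s').mul_left _)
      _ = γ * M * ∑' N : ℕ, P s j s' N := by
          rw [tsum_mul_left]
  have htot : ∑ s', ∑' N : ℕ, P s j s' N = 1 := by
    have := (hP1 s j).tsum_eq
    rw [Summable.tsum_prod hsum] at this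
    simpa [tsum_fintype] using this
  calc |(∑ s', ∑' N : ℕ, P s j s' N * γ ^ N * f₁ s') -
        (∑ s', ∑' N : ℕ, P s j s' N * γ ^ N * f₂ s')|
      = |∑ s', ((∑' N : ℕ, P s j s' N * γ ^ N * f₁ s') -
          (∑' N : ℕ, P s j s' N * γ ^ N * f₂ s'))| := by
        rw [Finset.sum_sub_distrib]
    _ ≤ ∑ s', |(∑' N : ℕ, P s j s' N * γ ^ N * f₁ s') -
          (∑' N : ℕ, P s j s' N * γ ^ N * f₂ s')| :=
        Finset.abs_sum_le_sum_abs _ _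
    _ ≤ ∑ s', γ * M * ∑' N : ℕ, P s j s' N :=
        Finset.sum_le_sum (fun s' _ => key s')
    _ = γ * M * ∑ s', ∑' N : ℕ, P s j s' N := by
        rw [Finset.mul_sum]
    _ = γ * M := by rw [htot, mul_one]
end
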